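/- arXiv:2405.03756 — 5 statements merged into one kernel-verified Lean document; each statement's English description precedes it below -/
import Mathlib

section
/- Let (V,h) be a real quadratic space of dimension d = p + q and signature (p,q) with p − q ≡ 1 (mod 8), set k = (d−1)/2, let (Σ,γ) be an irreducible real Clifford module over Cl(V,h), and let (e¹,…,e^d) be an orthonormal basis of (V,h). Then each γ(eⁱ) is invertible in End(Σ), with inverse h(eⁱ)·γ(eⁱ), and every endomorphism E ∈ End(Σ) admits the expansion E = 2^{−k}·( Tr(E)·id_Σ + Σ_{m=1}^{k} Σ_{1 ≤ i₁ < ⋯ < i_m ≤ d} Tr( γ(e^{i_m})^{−1}∘⋯∘γ(e^{i₁})^{−1}∘E ) · γ(e^{i₁})∘⋯∘γ(e^{i_m}) ). -/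
/-!
Write `γ_s` for the ordered product of the generators `γ(eⁱ)`, `i ∈ s`. Its inverse is the reversed
product of the `h(eⁱ) γ(eⁱ)`, and for `s ≠ t` the product `γ_t⁻¹ γ_s` is, up to a scalar, a product
of pairwise anticommuting invertible generators. Some generator `γ(eʲ)` anticommutes with it: take
`j` in exactly one of `s`, `t` when `|s| + |t|` is even, and `j ∉ s ∪ t` (possible since
`|s ∪ t| ≤ 2k < d`) when it is odd. Conjugation invariance of the trace then forces
`Tr(γ_t⁻¹ γ_s) = 0`, while `Tr(γ_s⁻¹ γ_s) = 2^k`. So the `4^k = dim End(Σ)` products `γ_s` with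
`|s| ≤ k` form a basis of `End(Σ)` whose dual basis is `E ↦ 2^{-k} Tr(γ_s⁻¹ E)`.
-/

open CliffordAlgebra

section

variable {ι R A : Type*} [CommRing R] [Ring A] [Algebra R A]

theorem smul_self_mul_eq_one {x : A} {c : R} (hx : x * x = algebraMap R A c) (hc : c * c = 1) :
    (c • x) * x = 1 := by
  rw [smul_mul_assoc, hx, Algebra.smul_def, ← map_mul, hc, map_one]

theorem mul_smul_self_eq_one {x : A} {c : R} (hx : x * x = algebraMap R A c) (hc : c * c = 1) :
    x * (c • x) = 1 := by
  rw [mul_smul_comm, hx, Algebra.smul_def, ← map_mul, hc, map_one]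

theorem List.prod_map_smul (g : ι → A) (ε : ι → R) (l : List ι) :
    (l.map fun i => ε i • g i).prod = (l.map ε).prod • (l.map g).prod := by
  induction l with
  | nil => simp
  | cons a l ih => simp only [map_cons, prod_cons, ih, smul_mul_smul_comm]

variable {g : ι → A} {ε : ι → R}

theorem List.prod_reverse_map_smul_mul_prod_map (hsq : ∀ i, g i * g i = algebraMap R A (ε i))
    (hε : ∀ i, ε i * ε i = 1) (l : List ι) :
    (l.reverse.map fun i => ε i • g i).prod * (l.map g).prod = 1 := by
  induction l with
  | nil => simp
  | cons a l ih =>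
    simp only [reverse_cons, map_append, prod_append, map_cons, prod_cons, map_nil, prod_nil,
      mul_one]
    rw [mul_assoc, ← mul_assoc (ε a • g a), smul_self_mul_eq_one (hsq a) (hε a), one_mul, ih]

theorem List.mul_prod_map_of_anticommute [DecidableEq ι]
    (hanti : _root_.Pairwise fun i j => g i * g j = -(g j * g i)) (j : ι) (l : List ι) :
    g j * (l.map g).prod = (-1 : ℤ) ^ l.countP (· ≠ j) • ((l.map g).prod * g j) := by
  induction l with
  | nil => simp
  | cons a l ih =>
    rw [map_cons, prod_cons, countP_cons, mul_assoc]
    by_cases haj : a = j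
    · subst haj
      rw [ih, mul_smul_comm]
      simp
    · rw [← mul_assoc, hanti (Ne.symm haj), neg_mul, mul_assoc, ih, mul_smul_comm]
      simp [haj, pow_succ]

end

theorem Finset.countP_sort_ne {ι : Type*} [LinearOrder ι] (s : Finset ι) (j : ι) :
    (s.sort (· ≤ ·)).countP (· ≠ j) = (s.erase j).card := by
  rw [← Multiset.coe_countP, Finset.sort_eq, Multiset.countP_eq_card_filter, ← Finset.filter_val,
    Finset.filter_ne', Finset.card_def]

theorem Finset.exists_odd_card_erase_add_card_erase {ι : Type*} [Fintype ι] [DecidableEq ι]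
    {s t : Finset ι} (hst : s ≠ t) (hcard : s.card + t.card < Fintype.card ι) :
    ∃ j, Odd ((s.erase j).card + (t.erase j).card) := by
  rcases Nat.even_or_odd (s.card + t.card) with heven | hodd
  · obtain ⟨j, hj⟩ : ∃ j, ¬(j ∈ s ↔ j ∈ t) := by simpa [Finset.ext_iff] using hst
    refine ⟨j, ?_⟩
    rw [Nat.even_iff] at heven
    rw [Nat.odd_iff, card_erase_eq_ite, card_erase_eq_ite]
    split_ifs with hjs hjt <;> first | tauto | (have := card_pos.2 ⟨j, ‹j ∈ _›⟩; omega)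
  · obtain ⟨j, hj⟩ : ∃ j, j ∉ s ∪ t := by
      by_contra! hall
      have hunion := card_union_le s t
      rw [eq_univ_iff_forall.2 hall, card_univ] at hunion
      omega
    rw [mem_union, not_or] at hj
    exact ⟨j, by rwa [erase_eq_of_notMem hj.1, erase_eq_of_notMem hj.2]⟩

theorem Finset.card_filter_card_le_of_card_eq {ι : Type*} [Fintype ι] {k : ℕ}
    (hι : Fintype.card ι = 2 * k + 1) :
    (univ.filter fun s : Finset ι => s.card ≤ k).card = 4 ^ k := by
  classical
  rw [card_eq_sum_card_fiberwise (f := card) (t := range (k + 1))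
      (fun s hs => by simp at hs ⊢; omega), ← Nat.sum_range_choose_halfway k]
  refine sum_congr rfl fun m hm => ?_
  rw [← hι, ← card_univ, ← card_powersetCard, powersetCard_eq_filter, powerset_univ, filter_filter]
  exact congrArg card (filter_congr fun s _ => by simp at hm; omega)

theorem LinearMap.trace_eq_zero_of_mul_eq_neg_mul {R M : Type*} [CommRing R] [IsAddTorsionFree R]
    [AddCommGroup M] [Module R M] {u f : Module.End R M} (hu : IsUnit u) (h : u * f = -(f * u)) :
    trace R M f = 0 := by
  obtain ⟨u, rfl⟩ := hu
  have hconj : (u : Module.End R M) * f * ↑u⁻¹ = -f := by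
    rw [h, neg_mul, Units.mul_inv_cancel_right]
  rw [← self_eq_neg, ← map_neg, ← hconj, trace_conj]

theorem Module.Dual.sum_apply_smul_of_biorthogonal {K V ι : Type*} [DivisionRing K]
    [AddCommGroup V] [Module K V] [FiniteDimensional K V] [Fintype ι] {v : ι → V}
    {f : ι → Module.Dual K V} (h0 : Pairwise fun i j => f i (v j) = 0) (h1 : ∀ i, f i (v i) = 1)
    (hcard : Fintype.card ι = Module.finrank K V) (x : V) : ∑ i, f i x • v i = x := by
  have hspan :=
    (LinearIndependent.of_pairwise_dual_eq_zero_one v f h0 h1).span_eq_top_of_card_eq_finrank' hcard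
  let T : V →ₗ[K] V := ∑ i, (f i).smulRight (v i)
  have hT : T = LinearMap.id := by
    refine LinearMap.ext_on_range hspan fun j => ?_
    simp only [T, LinearMap.sum_apply, LinearMap.smulRight_apply, LinearMap.id_apply]
    rw [Finset.sum_eq_single j (fun i _ hij => by rw [h0 hij, zero_smul]) (by simp), h1, one_smul]
  simpa [T] using LinearMap.congr_fun hT x

theorem LinearMap.trace_prod_reverse_map_smul_mul_prod_map_of_ne {ι R M : Type*} [LinearOrder ι]
    [Fintype ι] [CommRing R] [IsAddTorsionFree R] [AddCommGroup M] [Module R M]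
    {g : ι → Module.End R M} {ε : ι → R}
    (hsq : ∀ i, g i * g i = algebraMap R _ (ε i)) (hε : ∀ i, ε i * ε i = 1)
    (hanti : Pairwise fun i j => g i * g j = -(g j * g i)) {s t : Finset ι} (hst : s ≠ t)
    (hcard : s.card + t.card < Fintype.card ι) :
    LinearMap.trace R M (((t.sort (· ≤ ·)).reverse.map fun i => ε i • g i).prod *
      ((s.sort (· ≤ ·)).map g).prod) = 0 := by
  obtain ⟨j, hj⟩ := Finset.exists_odd_card_erase_add_card_erase hst hcard
  have hu : IsUnit (g j) :=
    ⟨⟨g j, ε j • g j, mul_smul_self_eq_one (hsq j) (hε j), smul_self_mul_eq_one (hsq j) (hε j)⟩,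
      rfl⟩
  rw [List.prod_map_smul, smul_mul_assoc, ← List.prod_append, ← List.map_append, map_smul,
    trace_eq_zero_of_mul_eq_neg_mul hu, smul_zero]
  rw [List.mul_prod_map_of_anticommute hanti, List.countP_append, List.countP_reverse,
    Finset.countP_sort_ne, Finset.countP_sort_ne, add_comm, Odd.neg_one_pow hj, neg_smul, one_smul]

theorem Module.End.eq_inv_two_pow_smul_sum_trace_smul_prod {ι K M : Type*} [LinearOrder ι]
    [Fintype ι] [Field K] [CharZero K] [AddCommGroup M] [Module K M] [FiniteDimensional K M]
    {g : ι → Module.End K M} {ε : ι → K} {k : ℕ} (hι : Fintype.card ι = 2 * k + 1)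
    (hM : Module.finrank K M = 2 ^ k)
    (hsq : ∀ i, g i * g i = algebraMap K _ (ε i)) (hε : ∀ i, ε i * ε i = 1)
    (hanti : Pairwise fun i j => g i * g j = -(g j * g i)) (E : Module.End K M) :
    E = (2 ^ k : K)⁻¹ •
      (LinearMap.trace K M E • 1 +
        ∑ s ∈ Finset.univ.filter fun s : Finset ι => 1 ≤ s.card ∧ s.card ≤ k,
          LinearMap.trace K M (((s.sort (· ≤ ·)).reverse.map fun i => ε i • g i).prod * E) •
            ((s.sort (· ≤ ·)).map g).prod) := by
  let inv (s : Finset ι) := ((s.sort (· ≤ ·)).reverse.map fun i => ε i • g i).prod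
  let prod (s : Finset ι) := ((s.sort (· ≤ ·)).map g).prod
  let f (t : {s : Finset ι // s.card ≤ k}) : Module.Dual K (Module.End K M) :=
    (2 ^ k : K)⁻¹ • (LinearMap.trace K M ∘ₗ LinearMap.mulLeft K (inv t))
  have h1 (t : {s : Finset ι // s.card ≤ k}) : f t (prod t) = 1 := by
    change (2 ^ k : K)⁻¹ • LinearMap.trace K M (inv t * prod t) = 1
    rw [List.prod_reverse_map_smul_mul_prod_map hsq hε, LinearMap.trace_one, hM, smul_eq_mul]
    push_cast
    exact inv_mul_cancel₀ (pow_ne_zero k two_ne_zero)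
  have h0 : Pairwise fun t s : {s : Finset ι // s.card ≤ k} => f t (prod s) = 0 := fun t s hts => by
    change (2 ^ k : K)⁻¹ • LinearMap.trace K M (inv t * prod s) = 0
    rw [LinearMap.trace_prod_reverse_map_smul_mul_prod_map_of_ne hsq hε hanti
      (Subtype.coe_injective.ne hts.symm) (by omega : s.1.card + t.1.card < Fintype.card ι),
      smul_zero]
  have hcard : Fintype.card {s : Finset ι // s.card ≤ k} = Module.finrank K (Module.End K M) := by
    rw [Fintype.card_subtype, Finset.card_filter_card_le_of_card_eq hι, Module.finrank_linearMap,
      hM, ← mul_pow]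
    norm_num
  have hempty : (∅ : Finset ι) ∈ Finset.univ.filter fun s : Finset ι => s.card ≤ k := by simp
  have herase : (Finset.univ.filter fun s : Finset ι => s.card ≤ k).erase ∅ =
      Finset.univ.filter fun s : Finset ι => 1 ≤ s.card ∧ s.card ≤ k := by
    ext s
    simp [Finset.one_le_card, Finset.nonempty_iff_ne_empty]
  calc E = ∑ t : {s : Finset ι // s.card ≤ k}, f t E • prod t :=
        (Module.Dual.sum_apply_smul_of_biorthogonal h0 h1 hcard E).symm
    _ = ∑ s ∈ Finset.univ.filter fun s : Finset ι => s.card ≤ k,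
          ((2 ^ k : K)⁻¹ * LinearMap.trace K M (inv s * E)) • prod s :=
        (Finset.sum_subtype _ (fun s => by simp)
          fun s => ((2 ^ k : K)⁻¹ * LinearMap.trace K M (inv s * E)) • prod s).symm
    _ = _ := by
      rw [← Finset.add_sum_erase _ _ hempty, herase, smul_add, Finset.smul_sum]
      simp [inv, prod, smul_smul]

theorem gamma_products_expansion_general
    {V : Type*} [AddCommGroup V] [Module ℝ V]
    (h : QuadraticForm ℝ V) (d p k : ℕ)
    (hk : d = 2 * k + 1)
    {S : Type*} [AddCommGroup S] [Module ℝ S] [FiniteDimensional ℝ S]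
    (hS : Module.finrank ℝ S = 2 ^ k)
    (γ : CliffordAlgebra h →ₐ[ℝ] Module.End ℝ S)
    (e : Module.Basis (Fin d) ℝ V)
    (horth : ∀ i j : Fin d, i ≠ j → QuadraticMap.polar h (e i) (e j) = 0)
    (hpos : ∀ i : Fin d, (i : ℕ) < p → h (e i) = 1)
    (hneg : ∀ i : Fin d, p ≤ (i : ℕ) → h (e i) = -1) :
    (∀ i : Fin d,
        γ (ι h (e i)) * (h (e i) • γ (ι h (e i))) = 1
        ∧ (h (e i) • γ (ι h (e i))) * γ (ι h (e i)) = 1)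
    ∧ ∀ E : Module.End ℝ S,
        E = (2 ^ k : ℝ)⁻¹ •
          ((LinearMap.trace ℝ S E) • (1 : Module.End ℝ S)
            + ∑ s ∈ Finset.univ.filter
                (fun s : Finset (Fin d) => 1 ≤ s.card ∧ s.card ≤ k),
              LinearMap.trace ℝ S
                  ((((s.sort (· ≤ ·)).reverse.map fun i => h (e i) • γ (ι h (e i))).prod) * E)
                • ((s.sort (· ≤ ·)).map fun i => γ (ι h (e i))).prod) := by
  have hsq (i : Fin d) : γ (ι h (e i)) * γ (ι h (e i)) = algebraMap ℝ _ (h (e i)) := by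
    rw [← map_mul, ι_sq_scalar, AlgHom.commutes]
  have hε (i : Fin d) : h (e i) * h (e i) = 1 := by
    rcases lt_or_ge (i : ℕ) p with hi | hi
    · rw [hpos i hi, one_mul]
    · rw [hneg i hi, neg_mul_neg, one_mul]
  have hanti : Pairwise fun i j : Fin d =>
      γ (ι h (e i)) * γ (ι h (e j)) = -(γ (ι h (e j)) * γ (ι h (e i))) := fun i j hij => by
    simpa only [map_mul, map_neg] using
      congrArg γ (ι_mul_ι_comm_of_isOrtho (QuadraticMap.isOrtho_polarBilin.mp (horth i j hij)))
  exact ⟨fun i => ⟨mul_smul_self_eq_one (hsq i) (hε i), smul_self_mul_eq_one (hsq i) (hε i)⟩,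
    Module.End.eq_inv_two_pow_smul_sum_trace_smul_prod (by rw [Fintype.card_fin, hk]) hS hsq hε
      hanti⟩

/-- For an irreducible real Clifford module `(S, γ)` in signature
`p - q ≡ 1 (mod 8)` and an orthonormal basis `(e¹,…,e^d)`: each `γ(eⁱ)` is invertible with
inverse `h(eⁱ) • γ(eⁱ)`, and every endomorphism `E` of `S` expands as
`E = 2^{-k} (Tr(E)·id + ∑_{1 ≤ m ≤ k} ∑_{i₁<⋯<i_m} Tr(γ(e^{i_m})⁻¹ ⋯ γ(e^{i₁})⁻¹ E) ·
γ(e^{i₁}) ⋯ γ(e^{i_m}))`. -/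
theorem gamma_products_expansion
    {V : Type*} [AddCommGroup V] [Module ℝ V]
    (h : QuadraticForm ℝ V) (d p q k : ℕ)
    (hd : d = p + q)
    (hsig : (p : ℤ) - (q : ℤ) ≡ 1 [ZMOD 8])
    (hk : d = 2 * k + 1)
    {S : Type*} [AddCommGroup S] [Module ℝ S] [FiniteDimensional ℝ S]
    (hS : Module.finrank ℝ S = 2 ^ k)
    (γ : CliffordAlgebra h →ₐ[ℝ] Module.End ℝ S)
    (hγ : Function.Surjective γ)
    (e : Module.Basis (Fin d) ℝ V)
    (horth : ∀ i j : Fin d, i ≠ j → QuadraticMap.polar h (e i) (e j) = 0)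
    (hpos : ∀ i : Fin d, (i : ℕ) < p → h (e i) = 1)
    (hneg : ∀ i : Fin d, p ≤ (i : ℕ) → h (e i) = -1) :
    (∀ i : Fin d,
        γ (ι h (e i)) * (h (e i) • γ (ι h (e i))) = 1
        ∧ (h (e i) • γ (ι h (e i))) * γ (ι h (e i)) = 1)
    ∧ ∀ E : Module.End ℝ S,
        E = (2 ^ k : ℝ)⁻¹ •
          ((LinearMap.trace ℝ S E) • (1 : Module.End ℝ S)
            + ∑ s ∈ Finset.univ.filter
                (fun s : Finset (Fin d) => 1 ≤ s.card ∧ s.card ≤ k),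
              LinearMap.trace ℝ S
                  ((((s.sort (· ≤ ·)).reverse.map fun i => h (e i) • γ (ι h (e i))).prod) * E)
                • ((s.sort (· ≤ ·)).map fun i => γ (ι h (e i))).prod) :=
  gamma_products_expansion_general h d p k hk hS γ e horth hpos hneg
end

section
/- Let Σ be a finite-dimensional real vector space and B a nondegenerate ℝ-bilinear form on Σ with B(x,y) = s·B(y,x) for all x,y ∈ Σ, where s ∈ {+1,−1}. For ε ∈ Σ write ε* := B(−,ε) ∈ Σ* and ε⊗ε* for the endomorphism ξ ↦ B(ξ,ε)·ε. Then for E ∈ End(Σ) the following are equivalent: (1) there exist μ ∈ {+1,−1} and ε ∈ Σ with E = μ·(ε⊗ε*); (2) B(Eξ₁,ξ₂) = s·B(ξ₁,Eξ₂) for all ξ₁,ξ₂ ∈ Σ, and E∘T∘E = Tr(E∘T)·E for every T ∈ End(Σ). Moreover, if E ≠ 0 then the sign μ in (1) is uniquely determined and ε is unique up to replacing ε by −ε. -/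
/-- The square `ε ⊗ ε*` of a vector `ε` with respect to a bilinear form `B`:
the endomorphism `ξ ↦ B(ξ, ε) • ε`. -/
def spinorSquare {S : Type*} [AddCommGroup S] [Module ℝ S]
    (B : S →ₗ[ℝ] S →ₗ[ℝ] ℝ) (ε : S) : Module.End ℝ S :=
  (B.flip ε).smulRight ε

lemma spinorSquare_apply {S : Type*} [AddCommGroup S] [Module ℝ S]
    (B : S →ₗ[ℝ] S →ₗ[ℝ] ℝ) (ε ξ : S) : spinorSquare B ε ξ = B ξ ε • ε := rfl

lemma trace_smulRight' {S : Type*} [AddCommGroup S] [Module ℝ S] [FiniteDimensional ℝ S]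
    (f : S →ₗ[ℝ] ℝ) (v : S) : LinearMap.trace ℝ S (f.smulRight v) = f v := by
  have h : f.smulRight v = dualTensorHom ℝ S S (f ⊗ₜ v) := by
    ext x; simp [dualTensorHom_apply]
  rw [h, LinearMap.trace_eq_contract_apply, contractLeft_apply]

/-- Let `B` be a nondegenerate bilinear form of symmetry type
`s ∈ {±1}` on a finite-dimensional real vector space `S`. An endomorphism `E` is of the
form `μ · (ε ⊗ ε*)` for some sign `μ` and `ε ∈ S` if and only if `E` is `s`-symmetric
with respect to `B` and `E ∘ T ∘ E = Tr(E ∘ T) · E` for every `T`. Moreover, if `E ≠ 0`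
then `μ` is unique and `ε` is unique up to sign. -/
theorem spinor_square_characterization
    {S : Type*} [AddCommGroup S] [Module ℝ S] [FiniteDimensional ℝ S]
    (B : S →ₗ[ℝ] S →ₗ[ℝ] ℝ)
    (hBnd : ∀ ξ : S, (∀ ξ' : S, B ξ ξ' = 0) → ξ = 0)
    (s : ℝ) (hs : s = 1 ∨ s = -1)
    (hBsymm : ∀ x y : S, B x y = s * B y x)
    (E : Module.End ℝ S) :
    ((∃ μ : ℝ, (μ = 1 ∨ μ = -1) ∧ ∃ ε : S, E = μ • spinorSquare B ε) ↔
      ((∀ ξ₁ ξ₂ : S, B (E ξ₁) ξ₂ = s * B ξ₁ (E ξ₂))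
        ∧ ∀ T : Module.End ℝ S, E * T * E = (LinearMap.trace ℝ S (E * T)) • E))
    ∧ (E ≠ 0 →
        ∀ (μ μ' : ℝ) (ε ε' : S),
          (μ = 1 ∨ μ = -1) → (μ' = 1 ∨ μ' = -1) →
          E = μ • spinorSquare B ε → E = μ' • spinorSquare B ε' →
          μ = μ' ∧ (ε = ε' ∨ ε = -ε')) := by
  have hs2 : s * s = 1 := by rcases hs with rfl | rfl <;> norm_num
  -- right nondegeneracy
  have hBnd' : ∀ u : S, (∀ ξ : S, B ξ u = 0) → u = 0 := by
    intro u hu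
    exact hBnd u (fun ξ => by rw [hBsymm, hu ξ, mul_zero])
  constructor
  · constructor
    · rintro ⟨μ, hμ, ε, rfl⟩
      constructor
      · intro ξ₁ ξ₂
        simp only [LinearMap.smul_apply, spinorSquare_apply, map_smul, LinearMap.smul_apply,
          smul_eq_mul]
        rw [hBsymm ε ξ₂]
        ring
      · intro T
        ext ξ
        have htr : LinearMap.trace ℝ S ((μ • spinorSquare B ε) * T)
            = μ * B (T ε) ε := by
          have h : (μ • spinorSquare B ε) * T
              = (μ • ((B.flip ε) ∘ₗ (T : S →ₗ[ℝ] S))).smulRight ε := by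
            ext x
            simp [spinorSquare_apply, Module.End.mul_apply, smul_smul, mul_comm]
          rw [h, trace_smulRight']
          simp
        rw [htr]
        simp only [Module.End.mul_apply, LinearMap.smul_apply, spinorSquare_apply,
          map_smul, smul_smul, smul_eq_mul]
        congr 1
        ring
    · rintro ⟨h1, h2⟩
      by_cases hE : E = 0
      · exact ⟨1, Or.inl rfl, 0, by ext ξ; simp [hE, spinorSquare_apply]⟩
      · have hex : ∃ ξ₀ : S, E ξ₀ ≠ 0 := by
          by_contra h
          push_neg at h
          exact hE (by ext x; simp [h x])
        obtain ⟨ξ₀, hv⟩ := hex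
        set v := E ξ₀ with hvdef
        obtain ⟨w, hw⟩ : ∃ w : S, B v w ≠ 0 := by
          by_contra h
          push_neg at h
          exact hv (hBnd v h)
        -- key rank-one identity
        have key : ∀ ξ : S, B v w • E ξ = B (E ξ) w • v := by
          intro ξ
          have hT := h2 ((B.flip w).smulRight ξ)
          have hcomp : E * ((B.flip w).smulRight ξ) = (B.flip w).smulRight (E ξ) := by
            ext x
            simp [Module.End.mul_apply, LinearMap.smulRight_apply]
          have := congrArg (fun F : Module.End ℝ S => F ξ₀) hT
          simp only [Module.End.mul_apply, LinearMap.smul_apply] at this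
          rw [hcomp, trace_smulRight'] at hT
          have := congrArg (fun F : Module.End ℝ S => F ξ₀) hT
          simpa [Module.End.mul_apply, LinearMap.smulRight_apply, map_smul] using this
        -- E ξ = (g ξ / c) • v
        have hEeq : ∀ ξ : S, E ξ = (B (E ξ) w / B v w) • v := by
          intro ξ
          have hk := key ξ
          rw [div_eq_inv_mul, mul_smul, ← hk, smul_smul, inv_mul_cancel₀ hw, one_smul]
        -- symmetry relation
        have hsym : ∀ ξ : S, B (E ξ) w * B v w = B (E w) w * B v ξ := by
          intro ξ
          have h1' := h1 ξ w
          have hk := congrArg (fun u => B ξ u) (key w)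
          simp only [map_smul, smul_eq_mul] at hk
          have hsB : B v ξ = s * B ξ v := hBsymm v ξ
          linear_combination B v w * h1' + s * hk - B (E w) w * hsB +
            B (E w) w * B ξ v * hs2 - B (E w) w * B ξ v * hs2
        set a := s * B (E w) w / (B v w * B v w) with hadef
        have hEa : E = a • spinorSquare B v := by
          ext ξ
          rw [hEeq ξ]
          simp only [LinearMap.smul_apply, spinorSquare_apply, smul_smul]
          congr 1
          have h := hsym ξ
          have hBvξ : B v ξ = s * B ξ v := hBsymm v ξ
          rw [hadef, div_mul_eq_mul_div, div_eq_div_iff hw (mul_ne_zero hw hw)]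
          linear_combination B v w * h + B (E w) w * B v w * hBvξ
        have ha : a ≠ 0 := by
          intro h0
          rw [h0, zero_smul] at hEa
          exact hE hEa
        -- build sign and vector
        refine ⟨if 0 ≤ a then 1 else -1, by split <;> simp, Real.sqrt |a| • v, ?_⟩
        have hsq : spinorSquare B (Real.sqrt |a| • v)
            = (Real.sqrt |a| * Real.sqrt |a|) • spinorSquare B v := by
          ext ξ
          simp only [spinorSquare_apply, map_smul, LinearMap.smul_apply, smul_smul, smul_eq_mul]
          ring_nf
        rw [hsq, smul_smul, Real.mul_self_sqrt (abs_nonneg a), hEa]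
        congr 1
        split
        · rw [one_mul, abs_of_nonneg ‹0 ≤ a›]
        · rw [abs_of_neg (lt_of_not_ge ‹¬ 0 ≤ a›)]; ring
  · intro hE μ μ' ε ε' hμ hμ' h h'
    have hεn : ε ≠ 0 := by
      rintro rfl
      apply hE
      rw [h]; ext ξ; simp [spinorSquare_apply]
    have hε'n : ε' ≠ 0 := by
      rintro rfl
      apply hE
      rw [h']; ext ξ; simp [spinorSquare_apply]
    obtain ⟨ξ₁, hξ₁⟩ : ∃ ξ, B ξ ε ≠ 0 := by
      by_contra hc; push_neg at hc; exact hεn (hBnd' ε hc)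
    obtain ⟨ξ₂, hξ₂⟩ : ∃ ξ, B ξ ε' ≠ 0 := by
      by_contra hc; push_neg at hc; exact hε'n (hBnd' ε' hc)
    have hμ0 : μ ≠ 0 := by rcases hμ with rfl | rfl <;> norm_num
    have heq : ∀ ξ : S, (μ * B ξ ε) • ε = (μ' * B ξ ε') • ε' := by
      intro ξ
      have := congrArg (fun F : Module.End ℝ S => F ξ) (h.symm.trans h')
      simpa [spinorSquare_apply, smul_smul] using this
    set k := (μ' * B ξ₁ ε') / (μ * B ξ₁ ε) with hkdef
    have hμB : μ * B ξ₁ ε ≠ 0 := mul_ne_zero hμ0 hξ₁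
    have hεk : ε = k • ε' := by
      have := heq ξ₁
      rw [hkdef, div_eq_inv_mul, mul_smul, ← this, smul_smul, inv_mul_cancel₀ hμB, one_smul]
    have hk2 : μ * (k * k) = μ' := by
      have h2 := heq ξ₂
      rw [hεk] at h2
      simp only [map_smul, smul_eq_mul, smul_smul] at h2
      have : (μ * (k * k) - μ') • ((B ξ₂ ε') • ε') = 0 := by
        rw [sub_smul, smul_smul, smul_smul, sub_eq_zero]
        convert h2 using 2; ring
      rcases smul_eq_zero.mp this with h0 | h0
      · linarith [sub_eq_zero.mp (by linarith [h0] : μ * (k * k) - μ' = 0)]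
      · exact absurd (smul_eq_zero.mp h0) (by push_neg; exact ⟨hξ₂, hε'n⟩)
    have hkk : k * k = 1 ∧ μ = μ' := by
      rcases hμ with rfl | rfl <;> rcases hμ' with rfl | rfl
      · constructor; linarith; rfl
      · exfalso; nlinarith [mul_self_nonneg k]
      · exfalso; nlinarith [mul_self_nonneg k]
      · constructor; nlinarith; rfl
    refine ⟨hkk.2, ?_⟩
    rcases mul_self_eq_one_iff.mp hkk.1 with hk | hk
    · left; rw [hεk, hk, one_smul]
    · right; rw [hεk, hk, neg_one_smul]
end

section
/- Let Σ be a finite-dimensional real vector space and B a nondegenerate ℝ-bilinear form on Σ with B(x,y) = s·B(y,x) for all x,y ∈ Σ, where s ∈ {+1,−1}. Suppose E ∈ End(Σ) is nonzero and satisfies: (i) B(Eξ₁,ξ₂) = s·B(ξ₁,Eξ₂) for all ξ₁,ξ₂ ∈ Σ; (ii) E∘E = Tr(E)·E; and (iii) there exists a single T₀ ∈ End(Σ) with Tr(E∘T₀) ≠ 0 and E∘T₀∘E = Tr(E∘T₀)·E. Then there exist μ ∈ {+1,−1} and a nonzero ε ∈ Σ such that E = μ·(ε⊗ε*), where ε*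 := B(−,ε) and ε⊗ε* is the endomorphism ξ ↦ B(ξ,ε)·ε. -/
/-- Let `B` be a nondegenerate bilinear form of symmetry type `s ∈ {±1}`
on a finite-dimensional real vector space `S`, and let `E ≠ 0` be an endomorphism that is
`s`-symmetric with respect to `B`, satisfies `E ∘ E = Tr(E) · E`, and satisfies
`E ∘ T₀ ∘ E = Tr(E ∘ T₀) · E` for a single `T₀` with `Tr(E ∘ T₀) ≠ 0`. Then
`E = μ · (ε ⊗ ε*)` for some sign `μ` and some nonzero `ε ∈ S`. -/
theorem spinor_square_reconstruction_of_single_witness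
    {S : Type*} [AddCommGroup S] [Module ℝ S] [FiniteDimensional ℝ S]
    (B : S →ₗ[ℝ] S →ₗ[ℝ] ℝ)
    (hBnd : ∀ ξ : S, (∀ ξ' : S, B ξ ξ' = 0) → ξ = 0)
    (s : ℝ) (hs : s = 1 ∨ s = -1)
    (hBsymm : ∀ x y : S, B x y = s * B y x)
    (E : Module.End ℝ S) (hE : E ≠ 0)
    (hEsym : ∀ ξ₁ ξ₂ : S, B (E ξ₁) ξ₂ = s * B ξ₁ (E ξ₂))
    (hEsq : E * E = (LinearMap.trace ℝ S E) • E)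
    (hwitness : ∃ T₀ : Module.End ℝ S,
      LinearMap.trace ℝ S (E * T₀) ≠ 0
        ∧ E * T₀ * E = (LinearMap.trace ℝ S (E * T₀)) • E) :
    ∃ μ : ℝ, (μ = 1 ∨ μ = -1) ∧ ∃ ε : S, ε ≠ 0 ∧ E = μ • spinorSquare B ε := by
  classical
  obtain ⟨T₀, hc, hPE⟩ := hwitness
  set c := LinearMap.trace ℝ S (E * T₀) with hcdef
  set P : Module.End ℝ S := c⁻¹ • (E * T₀) with hPdef
  -- P is idempotent
  have h1 : (E * T₀) * (E * T₀) = c • (E * T₀) := by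
    rw [← mul_assoc, hPE, smul_mul_assoc]
  have hPP : P ∘ₗ P = P := by
    have : P * P = P := by
      rw [hPdef, smul_mul_assoc, mul_smul_comm, h1, smul_smul, smul_smul]
      congr 1
      field_simp
    simpa [Module.End.mul_eq_comp] using this
  have hPE2 : P * E = E := by
    rw [hPdef, smul_mul_assoc, hPE, smul_smul, inv_mul_cancel₀ hc, one_smul]
  obtain ⟨p, hp⟩ := (LinearMap.isProj_iff_isIdempotentElem P).mpr hPP
  -- trace of P is 1
  have htr : LinearMap.trace ℝ S P = 1 := by
    rw [hPdef, map_smul, smul_eq_mul, ← hcdef, inv_mul_cancel₀ hc]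
  have hfin : Module.finrank ℝ p = 1 := by
    have := hp.trace
    rw [htr] at this
    exact_mod_cast this.symm
  -- all values of E lie in p
  have hEmem : ∀ ξ : S, E ξ ∈ p := by
    intro ξ
    have : P (E ξ) = E ξ := by
      have := congrArg (fun f : Module.End ℝ S => f ξ) hPE2
      simpa using this
    rw [← this]
    exact hp.map_mem (E ξ)
  -- choose a nonzero value v of E
  have hex : ∃ ξ₀ : S, E ξ₀ ≠ 0 := by
    by_contra h
    push_neg at h
    exact hE (by ext ξ; simp [h ξ])
  obtain ⟨ξ₀, hv⟩ := hex
  set v : S := E ξ₀ with hvdef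
  have hvmem : v ∈ p := hEmem ξ₀
  have hspan : Submodule.span ℝ {v} = p := by
    apply Submodule.eq_of_le_of_finrank_eq
    · exact Submodule.span_le.mpr (by simpa using hvmem)
    · rw [finrank_span_singleton hv, hfin]
  have hrank : ∀ ξ : S, ∃ a : ℝ, E ξ = a • v := by
    intro ξ
    have : E ξ ∈ Submodule.span ℝ ({v} : Set S) := by rw [hspan]; exact hEmem ξ
    obtain ⟨a, ha⟩ := Submodule.mem_span_singleton.mp this
    exact ⟨a, ha.symm⟩
  -- find η with B v η ≠ 0
  have hη : ∃ η : S, B v η ≠ 0 := by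
    by_contra h
    push_neg at h
    exact hv (hBnd v h)
  obtain ⟨η, hη⟩ := hη
  obtain ⟨g, hg⟩ := hrank η
  set l : ℝ := s * g / B v η with hldef
  have key : ∀ ξ : S, E ξ = (l * B ξ v) • v := by
    intro ξ
    obtain ⟨a, ha⟩ := hrank ξ
    have h1 : B (E ξ) η = s * B ξ (E η) := hEsym ξ η
    rw [ha, hg] at h1
    have h2 : a * B v η = s * (g * B ξ v) := by simpa using h1
    have h3 : a = l * B ξ v := by
      rw [hldef]
      field_simp
      linarith [h2]
    rw [ha, h3]
  have hl : l ≠ 0 := by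
    intro h
    apply hE
    ext ξ
    simp [key ξ, h]
  set r : ℝ := Real.sqrt |l| with hrdef
  have hr2 : r * r = |l| := Real.mul_self_sqrt (abs_nonneg l)
  have hrne : r ≠ 0 := by
    rw [hrdef]
    exact ne_of_gt (Real.sqrt_pos.mpr (abs_pos.mpr hl))
  set μ : ℝ := if 0 < l then (1 : ℝ) else -1 with hμdef
  have hμ : μ = 1 ∨ μ = -1 := by
    rw [hμdef]; split <;> simp
  have hμl : μ * |l| = l := by
    by_cases h : 0 < l
    · simp [hμdef, h, abs_of_pos h]
    · have hneg : l < 0 := lt_of_le_of_ne (not_lt.mp h) hl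
      simp [hμdef, h, abs_of_neg hneg]
  refine ⟨μ, hμ, r • v, smul_ne_zero hrne hv, ?_⟩
  ext ξ
  have : (μ • spinorSquare B (r • v)) ξ = (μ * (r * r * B ξ v)) • v := by
    simp only [LinearMap.smul_apply, spinorSquare, LinearMap.smulRight_apply,
      LinearMap.flip_apply, map_smul, smul_eq_mul, smul_smul]
    ring_nf
  rw [this, hr2, key ξ]
  congr 1
  linear_combination (-(B ξ) v) * hμl
end

section
/- Define on A := ℝ × ℝ³ the ℝ-bilinear product (c₁,α)∨(c₂,β) := ( c₁c₂ + α₁β₁ + α₂β₂ − α₃β₃ , c₁·β + c₂·α − L(α,β) ), where L(α,β) := ( −(α₂β₃ − α₃β₂), α₁β₃ − α₃β₁, α₁β₂ − α₂β₁ ) is the Minkowski Hodge dual of α∧β in signature (2,1). Then ∨ is associative with unit (1,0), so (A,∨) is a unital associative ℝ-algebra, and (A,∨) is isomorphic as a unital ℝ-algebra to the algebra of 2×2 real matrices. -/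
/-- The Minkowski Hodge dual of `α ∧ β` in signature `(2,1)`, written in coordinates. -/
def minkCross (α β : Fin 3 → ℝ) : Fin 3 → ℝ :=
  ![-(α 1 * β 2 - α 2 * β 1), α 0 * β 2 - α 2 * β 0, α 0 * β 1 - α 1 * β 0]

/-- The truncated Kähler–Atiyah product on `ℝ × ℝ³` in signature `(2,1)`:
`(c₁,α) ∨ (c₂,β) = (c₁c₂ + α₁β₁ + α₂β₂ − α₃β₃, c₁β + c₂α − *(α∧β))`. -/
def kaMul (a b : ℝ × (Fin 3 → ℝ)) : ℝ × (Fin 3 → ℝ) :=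
  (a.1 * b.1 + a.2 0 * b.2 0 + a.2 1 * b.2 1 - a.2 2 * b.2 2,
    a.1 • b.2 + b.1 • a.2 - minkCross a.2 b.2)

noncomputable def Phi : (ℝ × (Fin 3 → ℝ)) ≃ₗ[ℝ] Matrix (Fin 2) (Fin 2) ℝ where
  toFun x := !![x.1 + x.2 0, x.2 1 - x.2 2; x.2 1 + x.2 2, x.1 - x.2 0]
  map_add' x y := by
    ext i j
    fin_cases i <;> fin_cases j <;>
      simp [Matrix.add_apply, Pi.add_apply] <;> ring
  map_smul' c x := by
    ext i j
    fin_cases i <;> fin_cases j <;>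
      simp [Matrix.smul_apply, Pi.smul_apply, smul_eq_mul, mul_sub, mul_add]
  invFun M := ((M 0 0 + M 1 1) / 2,
    ![(M 0 0 - M 1 1) / 2, (M 0 1 + M 1 0) / 2, (M 1 0 - M 0 1) / 2])
  left_inv x := by
    refine Prod.ext ?_ (funext fun i => ?_)
    · simp
    · fin_cases i <;> simp <;> ring
  right_inv M := by
    ext i j
    fin_cases i <;> fin_cases j <;> simp <;> ring

lemma Phi_apply (x : ℝ × (Fin 3 → ℝ)) :
    Phi x = !![x.1 + x.2 0, x.2 1 - x.2 2; x.2 1 + x.2 2, x.1 - x.2 0] := rfl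

/-- The truncated Kähler–Atiyah product `∨` on `A = ℝ × ℝ³` is
associative with unit `(1,0)`, and the resulting unital associative ℝ-algebra is
isomorphic to the algebra of `2 × 2` real matrices (via an ℝ-linear equivalence that is
unital and multiplicative). -/
theorem truncated_KA_algebra_sig21_iso_matrices :
    (∀ x y z : ℝ × (Fin 3 → ℝ), kaMul (kaMul x y) z = kaMul x (kaMul y z))
    ∧ (∀ x : ℝ × (Fin 3 → ℝ),
        kaMul ((1 : ℝ), (0 : Fin 3 → ℝ)) x = x ∧ kaMul x ((1 : ℝ), (0 : Fin 3 → ℝ)) = x)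
    ∧ ∃ Φ : (ℝ × (Fin 3 → ℝ)) ≃ₗ[ℝ] Matrix (Fin 2) (Fin 2) ℝ,
        Φ ((1 : ℝ), (0 : Fin 3 → ℝ)) = 1
        ∧ ∀ x y : ℝ × (Fin 3 → ℝ), Φ (kaMul x y) = Φ x * Φ y := by
  refine ⟨?_, ?_, Phi, ?_, ?_⟩
  · intro x y z
    refine Prod.ext ?_ (funext fun i => ?_)
    · simp [kaMul, minkCross, Matrix.vecHead, Matrix.vecTail]; ring
    · fin_cases i <;> simp [kaMul, minkCross, Matrix.vecHead, Matrix.vecTail] <;> ring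
  · intro x
    refine ⟨Prod.ext ?_ (funext fun i => ?_), Prod.ext ?_ (funext fun i => ?_)⟩
    · simp [kaMul, minkCross]
    · fin_cases i <;> simp [kaMul, minkCross, Matrix.vecHead, Matrix.vecTail]
    · simp [kaMul, minkCross]
    · fin_cases i <;> simp [kaMul, minkCross, Matrix.vecHead, Matrix.vecTail]
  · rw [Phi_apply]
    ext i j
    fin_cases i <;> fin_cases j <;> simp [Matrix.one_apply]
  · intro x y
    rw [Phi_apply, Phi_apply, Phi_apply, Matrix.mul_fin_two]
    ext i j
    fin_cases i <;> fin_cases j <;>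
      simp [kaMul, minkCross, Matrix.vecHead, Matrix.vecTail] <;> ring
end

section
/- Let M be a connected smooth manifold, f : M → ℝ a smooth function, and ω a continuous one-form on M (i.e. a continuous section of the cotangent bundle) such that the differential of f satisfies d f|_m = f(m)·ω_m for every m ∈ M. Then either f is identically zero on M, or f is nowhere vanishing on M. Moreover, in the nowhere-vanishing case there exist a nonzero constant c ∈ ℝ and a smooth function φ : M → ℝ such that f = c·exp(φ) and dφ = ω. -/
open Bundle Manifold

open Set Metric Filter
open scoped Topology

/-- Grönwall-type vanishing: if `g` satisfies `g' = g • B` on a closed ball with `‖B‖ ≤ K`,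
and `g` vanishes at the center, it vanishes on the ball. -/
private lemma aux_vanish_on_ball {E : Type*} [NormedAddCommGroup E] [NormedSpace ℝ E]
    {g : E → ℝ} {B : E → (E →L[ℝ] ℝ)} {x₀ : E} {r K : ℝ}
    (hd : ∀ x ∈ closedBall x₀ r, HasFDerivAt g (g x • B x) x)
    (hK : ∀ x ∈ closedBall x₀ r, ‖B x‖ ≤ K) (hr : 0 < r) (h0 : g x₀ = 0) :
    ∀ x ∈ closedBall x₀ r, g x = 0 := by
  intro x₁ hx₁
  have hK0 : 0 ≤ K := le_trans (norm_nonneg _) (hK x₀ (mem_closedBall_self hr.le))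
  set v : E := x₁ - x₀ with hv
  have hvr : ‖v‖ ≤ r := by simpa [hv, dist_eq_norm] using hx₁
  set p : ℝ → E := fun t => x₀ + t • v with hp
  have hpmem : ∀ t ∈ Icc (0:ℝ) 1, p t ∈ closedBall x₀ r := by
    intro t ht
    simp only [hp, mem_closedBall, dist_eq_norm, add_sub_cancel_left, norm_smul,
      Real.norm_eq_abs]
    calc |t| * ‖v‖ ≤ 1 * r := by
          apply mul_le_mul _ hvr (norm_nonneg _) zero_le_one
          rw [abs_le]; exact ⟨le_trans (by norm_num) ht.1, ht.2⟩
      _ = r := one_mul r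
  have hp' : ∀ t : ℝ, HasDerivAt p v t := by
    intro t
    have : HasDerivAt (fun t : ℝ => t • v) ((1:ℝ) • v) t := (hasDerivAt_id t).smul_const v
    simpa [hp, one_smul] using this.const_add x₀
  set h : ℝ → ℝ := fun t => g (p t) with hh
  have hderiv : ∀ t ∈ Icc (0:ℝ) 1, HasDerivAt h ((g (p t) • B (p t)) v) t := by
    intro t ht
    exact (hd (p t) (hpmem t ht)).comp_hasDerivAt t (hp' t)
  have hcont : ContinuousOn h (Icc (0:ℝ) 1) :=
    fun t ht => (hderiv t ht).continuousAt.continuousWithinAt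
  have hbound : ∀ t ∈ Ico (0:ℝ) 1, ‖(g (p t) • B (p t)) v‖ ≤ (K * r) * ‖h t‖ + 0 := by
    intro t ht
    have h1 : ‖(g (p t) • B (p t)) v‖ ≤ |g (p t)| * (‖B (p t)‖ * ‖v‖) := by
      rw [ContinuousLinearMap.smul_apply]
      calc ‖g (p t) • (B (p t)) v‖ = |g (p t)| * ‖(B (p t)) v‖ := by
            simp [norm_smul]
        _ ≤ |g (p t)| * (‖B (p t)‖ * ‖v‖) := by
            gcongr
            exact (B (p t)).le_opNorm v
    refine h1.trans ?_
    rw [add_zero]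
    have : ‖B (p t)‖ * ‖v‖ ≤ K * r :=
      mul_le_mul (hK _ (hpmem t (Ico_subset_Icc_self ht))) hvr (norm_nonneg _) hK0
    calc |g (p t)| * (‖B (p t)‖ * ‖v‖) ≤ |g (p t)| * (K * r) := by
          gcongr
      _ = (K * r) * ‖h t‖ := by rw [hh]; simp [Real.norm_eq_abs]; ring
  have ha0 : ‖h 0‖ ≤ (0:ℝ) := by
    have : h 0 = 0 := by simp [hh, hp, h0]
    simp [this]
  have key : ∀ t ∈ Icc (0:ℝ) 1, ‖h t‖ ≤ gronwallBound 0 (K * r) 0 (t - 0) :=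
    norm_le_gronwallBound_of_norm_deriv_right_le hcont
      (fun t ht => (hderiv t (Ico_subset_Icc_self ht)).hasDerivWithinAt) ha0 hbound
  have := key 1 (by norm_num)
  rw [gronwallBound_ε0_δ0] at this
  have hx : h 1 = g x₁ := by simp [hh, hp, hv]
  have := le_antisymm this (norm_nonneg _)
  rw [norm_eq_zero] at this
  rwa [hx] at this

/-- Local vanishing: if `df = f·ω` with `ω` a continuous one-form and `f m₀ = 0`,
then `f` vanishes in a neighborhood of `m₀`. -/
private lemma aux_local_zero
    {E : Type*} [NormedAddCommGroup E] [NormedSpace ℝ E]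
    {H : Type*} [TopologicalSpace H] (I : ModelWithCorners ℝ E H)
    {M : Type*} [TopologicalSpace M] [ChartedSpace H M]
    [IsManifold I (⊤ : ℕ∞) M] [I.Boundaryless]
    (f : M → ℝ) (hf : ContMDiff I 𝓘(ℝ, ℝ) (⊤ : ℕ∞) f)
    (ω : (m : M) → TangentSpace I m →L[ℝ] ℝ)
    (hω : Continuous fun m : M =>
      (TotalSpace.mk m (ω m) : TotalSpace (E →L[ℝ] ℝ)
        (fun x ↦ TangentSpace I x →SL[RingHom.id ℝ] Bundle.Trivial M ℝ x)))
    (hdf : ∀ (m : M) (X : TangentSpace I m), mfderiv I 𝓘(ℝ, ℝ) f m X = f m * ω m X)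
    (m₀ : M) (h0 : f m₀ = 0) : ∀ᶠ m in 𝓝 m₀, f m = 0 := by
  classical
  set e := extChartAt I m₀ with he
  set U := (chartAt H m₀).source with hU
  -- the coordinate representation of ω
  set A : M → (E →L[ℝ] ℝ) := fun m =>
    ((trivializationAt (E →L[ℝ] ℝ)
      (fun x ↦ TangentSpace I x →SL[RingHom.id ℝ] Bundle.Trivial M ℝ x) m₀)
      ⟨m, ω m⟩).2 with hA
  have hAcont : ContinuousOn A U := by
    have hmaps : Set.MapsTo (fun m : M => (TotalSpace.mk m (ω m) : TotalSpace (E →L[ℝ] ℝ)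
        (fun x ↦ TangentSpace I x →SL[RingHom.id ℝ] Bundle.Trivial M ℝ x))) U
        (trivializationAt (E →L[ℝ] ℝ)
          (fun x ↦ TangentSpace I x →SL[RingHom.id ℝ] Bundle.Trivial M ℝ x)
          m₀).source := by
      intro m hm
      rw [hom_trivializationAt_source]
      exact Set.mem_preimage.2 ⟨hm, Set.mem_univ _⟩
    exact continuous_snd.comp_continuousOn
      ((Trivialization.continuousOn _).comp hω.continuousOn hmaps)
  -- pointwise decomposition of ω through A
  have hAeq : ∀ m ∈ U, ∀ v : E,
      A m v = ω m ((trivializationAt E (TangentSpace I) m₀).symmL ℝ m v) := by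
    intro m hm v
    have h1 : A m = ((trivializationAt ℝ (Bundle.Trivial M ℝ) m₀).continuousLinearMapAt ℝ
        m).comp ((ω m).comp ((trivializationAt E (TangentSpace I) m₀).symmL ℝ m)) := rfl
    rw [h1]
    have h2 : ∀ y : ℝ,
        (trivializationAt ℝ (Bundle.Trivial M ℝ) m₀).continuousLinearMapAt ℝ m y = y := by
      intro y
      rw [Trivialization.continuousLinearMapAt_apply,
        Trivialization.coe_linearMapAt_of_mem _
          (show m ∈ (trivializationAt ℝ (Bundle.Trivial M ℝ) m₀).baseSet from Set.mem_univ m)]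
      rfl
    simp only [ContinuousLinearMap.comp_apply]
    exact h2 _
  -- symmL is the derivative of the inverse chart
  have hsymmL : ∀ m ∈ U, (trivializationAt E (TangentSpace I) m₀).symmL ℝ m =
      mfderivWithin 𝓘(ℝ, E) I e.symm (range I) (e m) := by
    intro m hm
    rw [TangentBundle.symmL_trivializationAt_eq_core (by simpa using hm),
      tangentBundleCore_coordChange_achart]
    simp only [mfderivWithin, writtenInExtChartAt, modelWithCornersSelf_coe, range_id,
      inter_univ]
    split_ifs with hcase
    · have hmm : e.symm (e m) = m := (extChartAt I m₀).left_inv (by simpa using hm)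
      rw [hmm]
      exact (if_pos hcase).symm
    · exact absurd (mdifferentiableWithinAt_extChartAt_symm
        ((extChartAt I m₀).map_source (by simpa using hm))) hcase
  -- derivative of g := f ∘ e.symm
  set g : E → ℝ := f ∘ e.symm with hg
  have hg' : ∀ x ∈ e.target, HasFDerivAt g (g x • A (e.symm x)) x := by
    intro x hx
    have hmU : e.symm x ∈ U := by
      rw [hU, ← extChartAt_source I]
      exact (extChartAt I m₀).map_target hx
    set m := e.symm x with hm
    have hmd : MDifferentiableAt 𝓘(ℝ, E) I e.symm x := by
      have h1 := mdifferentiableWithinAt_extChartAt_symm (I := I) (x := m₀) hx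
      rwa [I.range_eq_univ, mdifferentiableWithinAt_univ] at h1
    set D := mfderivWithin 𝓘(ℝ, E) I e.symm (range I) x with hD
    have hDeq : mfderiv 𝓘(ℝ, E) I e.symm x = D := by
      rw [hD, I.range_eq_univ, mfderivWithin_univ]
    have hsymm : HasMFDerivAt 𝓘(ℝ, E) I e.symm x D := hDeq ▸ hmd.hasMFDerivAt
    have hfm : HasMFDerivAt I 𝓘(ℝ, ℝ) f m (mfderiv I 𝓘(ℝ, ℝ) f m) :=
      ((hf m).mdifferentiableAt (by simp)).hasMFDerivAt
    have hcomp : HasMFDerivAt 𝓘(ℝ, E) 𝓘(ℝ, ℝ) g x ((mfderiv I 𝓘(ℝ, ℝ) f m).comp D) :=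
      hfm.comp x hsymm
    have hfd : HasFDerivAt g ((mfderiv I 𝓘(ℝ, ℝ) f m).comp D) x :=
      hasMFDerivAt_iff_hasFDerivAt.1 hcomp
    refine hfd.congr_fderiv ?_
    ext v
    have h3 : A m v = ω m (D v) := by
      rw [hAeq m hmU v, hsymmL m hmU]
      congr 2
      rw [hm, (extChartAt I m₀).right_inv hx]
    have h1 : ((mfderiv I 𝓘(ℝ, ℝ) f m).comp D) v = f m * ω m (D v) := hdf m (D v)
    have h4 : (g x • A m) v = f m * ω m (D v) := by
      have h2 : (g x • A m) v = g x * A m v := rfl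
      rw [h2, h3]
      rfl
    exact (h4.trans h1.symm).symm
  -- find a ball with bounded A
  have hU_open : IsOpen U := (chartAt H m₀).open_source
  have htarget_open : IsOpen e.target := isOpen_extChartAt_target m₀
  have hx₀ : e m₀ ∈ e.target := (extChartAt I m₀).map_source (mem_extChartAt_source m₀)
  have hAx : ContinuousOn (fun x => A (e.symm x)) e.target := by
    apply hAcont.comp (continuousOn_extChartAt_symm m₀)
    intro x hx
    rw [hU, ← extChartAt_source I]
    exact (extChartAt I m₀).map_target hx
  obtain ⟨r, hr, hball⟩ : ∃ r > 0, closedBall (e m₀) r ⊆ e.target ∩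
      {x | ‖A (e.symm x)‖ ≤ ‖A (e.symm (e m₀))‖ + 1} := by
    have h1 : e.target ∩ {x | ‖A (e.symm x)‖ ≤ ‖A (e.symm (e m₀))‖ + 1} ∈ 𝓝 (e m₀) := by
      apply Filter.inter_mem (htarget_open.mem_nhds hx₀)
      have hc : ContinuousAt (fun x => ‖A (e.symm x)‖) (e m₀) :=
        ((hAx (e m₀) hx₀).continuousAt (htarget_open.mem_nhds hx₀)).norm
      have := hc.preimage_mem_nhds
        (Iic_mem_nhds (show ‖A (e.symm (e m₀))‖ < ‖A (e.symm (e m₀))‖ + 1 by linarith))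
      exact this
    rcases Metric.mem_nhds_iff.1 h1 with ⟨ε, hε, hsub⟩
    exact ⟨ε/2, by linarith, (closedBall_subset_ball (by linarith)).trans hsub⟩
  -- apply Gronwall
  have hz : ∀ x ∈ closedBall (e m₀) r, g x = 0 := by
    apply aux_vanish_on_ball (K := ‖A (e.symm (e m₀))‖ + 1)
      (fun x hx => hg' x (hball hx).1) (fun x hx => (hball hx).2) hr
    simp [hg, (extChartAt I m₀).left_inv (mem_extChartAt_source m₀), h0]
    rw [e.left_inv (mem_extChartAt_source m₀), h0]
  -- pull back to the manifold
  have hsrc : e.source ∈ 𝓝 m₀ := extChartAt_source_mem_nhds m₀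
  have hcont : ContinuousAt e m₀ := continuousAt_extChartAt m₀
  have hpre : e ⁻¹' closedBall (e m₀) r ∈ 𝓝 m₀ :=
    hcont.preimage_mem_nhds (closedBall_mem_nhds _ hr)
  filter_upwards [hsrc, hpre] with m hm hm'
  have : g (e m) = 0 := hz _ hm'
  rwa [hg, Function.comp_apply, (extChartAt I m₀).left_inv hm] at this

/-- Let `M` be a connected smooth manifold (without boundary),
`f : M → ℝ` smooth, and `ω` a continuous one-form on `M` with `df = f · ω`. Then either
`f ≡ 0` or `f` is nowhere vanishing; and in the nowhere-vanishing case there are a nonzero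
constant `c` and a smooth function `φ : M → ℝ` with `f = c · exp φ` and `dφ = ω`. -/
theorem eq_const_mul_exp_of_d_eq_smul_oneForm
    {E : Type*} [NormedAddCommGroup E] [NormedSpace ℝ E]
    {H : Type*} [TopologicalSpace H] (I : ModelWithCorners ℝ E H)
    {M : Type*} [TopologicalSpace M] [ChartedSpace H M]
    [IsManifold I (⊤ : ℕ∞) M] [I.Boundaryless] [ConnectedSpace M]
    (f : M → ℝ) (hf : ContMDiff I 𝓘(ℝ, ℝ) (⊤ : ℕ∞) f)
    (ω : (m : M) → TangentSpace I m →L[ℝ] ℝ)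
    (hω : Continuous fun m : M =>
      (TotalSpace.mk m (ω m) : TotalSpace (E →L[ℝ] ℝ)
        (fun x ↦ TangentSpace I x →SL[RingHom.id ℝ] Bundle.Trivial M ℝ x)))
    (hdf : ∀ (m : M) (X : TangentSpace I m), mfderiv I 𝓘(ℝ, ℝ) f m X = f m * ω m X) :
    ((∀ m : M, f m = 0) ∨ (∀ m : M, f m ≠ 0))
    ∧ ((∀ m : M, f m ≠ 0) →
        ∃ c : ℝ, c ≠ 0 ∧ ∃ φ : M → ℝ, ContMDiff I 𝓘(ℝ, ℝ) (⊤ : ℕ∞) φ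
          ∧ (∀ m : M, f m = c * Real.exp (φ m))
          ∧ ∀ (m : M) (X : TangentSpace I m), mfderiv I 𝓘(ℝ, ℝ) φ m X = ω m X) := by
  classical
  have hfc : Continuous f := hf.continuous
  -- dichotomy
  have dich : (∀ m : M, f m = 0) ∨ (∀ m : M, f m ≠ 0) := by
    by_cases hex : ∃ m : M, f m = 0
    · left
      obtain ⟨m₁, hm₁⟩ := hex
      have hclopen : IsClopen {m : M | f m = 0} := by
        constructor
        · exact isClosed_singleton.preimage hfc
        · rw [isOpen_iff_mem_nhds]
          intro m hm
          exact aux_local_zero I f hf ω hω hdf m hm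
      have := hclopen.eq_univ ⟨m₁, hm₁⟩
      intro m
      have : m ∈ {m : M | f m = 0} := this ▸ mem_univ m
      exact this
    · right
      push_neg at hex
      exact hex
  refine ⟨dich, fun hne => ?_⟩
  obtain ⟨m₀⟩ : Nonempty M := inferInstance
  set c := f m₀ with hc
  have hc0 : c ≠ 0 := hne m₀
  -- constant sign
  have hpos : ∀ m : M, 0 < f m / c := by
    intro m
    rcases lt_or_gt_of_ne (hne m) with hm | hm <;> rcases lt_or_gt_of_ne hc0 with hcneg | hcpos
    · exact div_pos_of_neg_of_neg hm hcneg
    · exfalso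
      have : (0:ℝ) ∈ Icc (f m) (f m₀) := ⟨hm.le, hcpos.le⟩
      obtain ⟨x, hx⟩ := intermediate_value_univ m m₀ hfc this
      exact hne x hx
    · exfalso
      have : (0:ℝ) ∈ Icc (f m₀) (f m) := ⟨hcneg.le, hm.le⟩
      obtain ⟨x, hx⟩ := intermediate_value_univ m₀ m hfc this
      exact hne x hx
    · exact div_pos hm hcpos
  refine ⟨c, hc0, fun m => Real.log (f m / c), ?_, ?_, ?_⟩
  · -- smoothness of φ
    intro m
    have h1 : ContMDiffAt I 𝓘(ℝ, ℝ) (⊤ : ℕ∞) (fun m => f m / c) m := (hf m).div_const c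
    have h2' : ContMDiffAt 𝓘(ℝ, ℝ) 𝓘(ℝ, ℝ) (⊤ : ℕ∞) Real.log (f m / c) :=
      (Real.contDiffAt_log.2 (ne_of_gt (hpos m))).contMDiffAt
    exact h2'.comp m h1
  · -- f = c * exp φ
    intro m
    rw [Real.exp_log (hpos m)]
    field_simp
  · -- dφ = ω
    intro m X
    have hfm : HasMFDerivAt I 𝓘(ℝ, ℝ) f m (mfderiv I 𝓘(ℝ, ℝ) f m) :=
      ((hf m).mdifferentiableAt (by simp)).hasMFDerivAt
    have hlog : HasDerivAt (fun y : ℝ => Real.log (y / c)) ((f m / c)⁻¹ * (1/c)) (f m) := by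
      have h1 : HasDerivAt (fun y : ℝ => y / c) (1/c) (f m) := by
        simpa using (hasDerivAt_id (f m)).div_const c
      have h2 : HasDerivAt Real.log (f m / c)⁻¹ (f m / c) :=
        Real.hasDerivAt_log (ne_of_gt (hpos m))
      exact h2.comp (f m) h1
    have hcomp : HasMFDerivAt I 𝓘(ℝ, ℝ) (fun m => Real.log (f m / c)) m
        ((ContinuousLinearMap.smulRight (1 : ℝ →L[ℝ] ℝ) ((f m / c)⁻¹ * (1/c))).comp
          (mfderiv I 𝓘(ℝ, ℝ) f m)) := by
      have houter : HasMFDerivAt 𝓘(ℝ, ℝ) 𝓘(ℝ, ℝ) (fun y : ℝ => Real.log (y / c)) (f m)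
          (ContinuousLinearMap.smulRight (1 : ℝ →L[ℝ] ℝ) ((f m / c)⁻¹ * (1/c))) := by
        rw [hasMFDerivAt_iff_hasFDerivAt]
        exact hlog.hasFDerivAt
      exact houter.comp m hfm
    have hfmne : f m ≠ 0 := hne m
    have hX : (mfderiv I 𝓘(ℝ, ℝ) f m X : ℝ) = f m * ω m X := hdf m X
    have h4 : mfderiv I 𝓘(ℝ, ℝ) (fun m => Real.log (f m / c)) m X
        = (f m * ω m X) * ((f m / c)⁻¹ * (1/c)) := by
      rw [hcomp.mfderiv, ← hX]
      rfl
    rw [h4]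
    field_simp
end
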